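/- (Theorem 1, with the coefficient κ replaced by its proven bounds.) Let ρ be a density matrix on the N-cell tensor product space ⊗_{i=1}^N ℂ^{n_i}, let H = Σ_{i=1}^N H_i where each H_i is a Hermitian n_i×n_i matrix acting on cell i and as the identity on all other cells, and let V be any Hermitian operator on the total space. Then the instantaneous charging power P = tr(iH[ρ,V]) satisfies P ≤ 2 √( Γ_C(ρ) · (Σ_{i=1}^N tr(H_i²)) · Var_ρ(V) ), where tr(H_i²) is the trace of the square of the single-cell matrix H_i; and if ρ is pure, then the sharper bound P ≤ √( 2 Γ_C(ρ) · (Σ_{i=1}^N tr(H_i²)) · Var_ρ(V) ) holds. -/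

import Mathlib

open Matrix BigOperators
open scoped ComplexOrder

noncomputable section

/-- Commutator of two square matrices. -/
def mComm {d : Type*} [Fintype d] (A B : Matrix d d ℂ) : Matrix d d ℂ := A * B - B * A

/-- Commutation matrix `γ_C(ρ, M)` built from the square root `s = √ρ` of a density
matrix, with entries `γ_C(ρ,M)_{μν} = −tr([M_μ,√ρ][M_ν,√ρ])`. -/
def gammaC {d ι : Type*} [Fintype d] (s : Matrix d d ℂ) (M : ι → Matrix d d ℂ) :
    Matrix ι ι ℝ :=
  fun μ ν => (-(Matrix.trace (mComm (M μ) s * mComm (M ν) s))).re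

/-- Largest eigenvalue of a (finite, real symmetric) matrix. -/
def maxEig {ι : Type*} [Fintype ι] (G : Matrix ι ι ℝ) : ℝ :=
  sSup {c : ℝ | ∃ v : ι → ℝ, v ≠ 0 ∧ G.mulVec v = c • v}

/-- Variance `Var_ρ(V) = tr(ρV²) − (tr(ρV))²` (a real number). -/
def varMat {d : Type*} [Fintype d] (ρ V : Matrix d d ℂ) : ℝ :=
  (Matrix.trace (ρ * V * V)).re - (Matrix.trace (ρ * V)).re ^ 2

/-- The operator on the `N`-cell space `⊗_j ℂ^{n_j}` acting as `A` on cell `i`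
and as the identity on all other cells. -/
def localOp {N : ℕ} (n : Fin N → ℕ) (i : Fin N)
    (A : Matrix (Fin (n i)) (Fin (n i)) ℂ) :
    Matrix ((j : Fin N) → Fin (n j)) ((j : Fin N) → Fin (n j)) ℂ :=
  fun x y => A (x i) (y i) * ∏ j ∈ Finset.univ.erase i, (if x j = y j then 1 else 0)

/-- The local observable set built from a choice `A i α` of Hermitian bases of the
individual cells. -/
def obsFamily {N : ℕ} (n : Fin N → ℕ)
    (A : ∀ i : Fin N, Fin (n i ^ 2) → Matrix (Fin (n i)) (Fin (n i)) ℂ) :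
    ((i : Fin N) × Fin (n i ^ 2)) →
      Matrix ((j : Fin N) → Fin (n j)) ((j : Fin N) → Fin (n j)) ℂ :=
  fun μ => localOp n μ.1 (A μ.1 μ.2)

/-!
With `s = √ρ` and `W = V - tr(ρV)`, cyclicity of the trace gives
`tr(H[ρ,V]) = tr([H,s](sW + Ws))`, so the power is at most `‖[H,s]‖ ‖sW + Ws‖` by the
Cauchy–Schwarz inequality for the Frobenius inner product. Expanding each `H_i` in the orthonormal
Hermitian basis with real coefficients `c`, `‖[H,s]‖² = cᵀ γ_C c ≤ Γ_C |c|² = Γ_C Σ tr(H_i²)`.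
By the parallelogram law `‖sW + Ws‖² ≤ 2‖sW‖² + 2‖Ws‖² = 4 Var_ρ(V)`. For a pure state `s = ρ`
and `tr(ρWρW) = tr(ρW)² = 0`, which improves this to `‖sW + Ws‖² = 2 Var_ρ(V)`.
-/

namespace Matrix

variable {d : Type*} [Fintype d]

lemma re_trace_conjTranspose_mul_self_nonneg (A : Matrix d d ℂ) :
    0 ≤ (trace (Aᴴ * A)).re :=
  (Complex.nonneg_iff.mp (posSemidef_conjTranspose_mul_self A).trace_nonneg).1

lemma norm_trace_conjTranspose_mul_le (A B : Matrix d d ℂ) :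
    ‖trace (Aᴴ * B)‖ ≤ √(trace (Aᴴ * A)).re * √(trace (Bᴴ * B)).re := by
  classical
  let _ := toMatrixSeminormedAddCommGroup (1 : Matrix d d ℂ) PosSemidef.one
  let _ := toMatrixInnerProductSpace (1 : Matrix d d ℂ) PosSemidef.one
  have inner_eq (X Y : Matrix d d ℂ) : inner ℂ X Y = trace (Xᴴ * Y) := by
    rw [trace_mul_comm]; exact congrArg (fun Z => trace (Z * Xᴴ)) (Matrix.mul_one Y)
  have norm_eq (X : Matrix d d ℂ) : ‖X‖ = √(trace (Xᴴ * X)).re := by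
    rw [norm_eq_sqrt_re_inner (𝕜 := ℂ), inner_eq]; rfl
  simpa only [inner_eq, norm_eq] using norm_inner_le_norm (𝕜 := ℂ) A B

lemma IsHermitian.trace_mul_eq_ofReal_re {A B : Matrix d d ℂ} (hA : A.IsHermitian)
    (hB : B.IsHermitian) : trace (A * B) = ((trace (A * B)).re : ℂ) := by
  refine (Complex.conj_eq_iff_re.mp ?_).symm
  rw [starRingEnd_apply, ← trace_conjTranspose, conjTranspose_mul, hA.eq, hB.eq, trace_mul_comm]

lemma trace_vecMulVec_mul_mul_vecMulVec_mul {R : Type*} [CommSemiring R] (ψ φ : d → R)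
    (W : Matrix d d R) :
    trace (vecMulVec ψ φ * W * vecMulVec ψ φ * W) = trace (vecMulVec ψ φ * W) ^ 2 := by
  have h : trace (vecMulVec ψ φ * W) = φ ᵥ* W ⬝ᵥ ψ := by
    rw [vecMulVec_mul, trace_vecMulVec, dotProduct_comm]
  rw [vecMulVec_mul, vecMulVec_mul_vecMulVec, vecMulVec_smul, smul_mul, trace_smul,
    ← vecMulVec_mul, h, smul_eq_mul, sq]

lemma PosSemidef.eq_of_mul_self_eq_of_idempotent [DecidableEq d] {s ρ : Matrix d d ℂ}
    (hs : s.PosSemidef) (hρ : ρ.PosSemidef) (hss : s * s = ρ) (hρρ : ρ * ρ = ρ) : s = ρ := by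
  open scoped MatrixOrder Matrix.Norms.L2Operator in
  exact (CFC.sq_eq_sq_iff s ρ hs.nonneg hρ.nonneg).mp (by rw [sq, sq, hss, hρρ])

end Matrix

section Orthonormal

variable {K d ι : Type*} [Field K] [Fintype d] [Fintype ι] [DecidableEq ι] {A : ι → Matrix d d K}

lemma trace_sum_smul_mul_of_orthonormal
    (hA : ∀ α β, trace (A α * A β) = if α = β then 1 else 0) (t : ι → K) (β : ι) :
    trace ((∑ α, t α • A α) * A β) = t β := by
  simp [Finset.sum_mul, trace_sum, hA, Matrix.smul_mul]

lemma eq_sum_trace_mul_smul_of_orthonormal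
    (hA : ∀ α β, trace (A α * A β) = if α = β then 1 else 0)
    (hcard : Fintype.card ι = Fintype.card d ^ 2) (B : Matrix d d K) :
    B = ∑ α, trace (B * A α) • A α := by
  have hli : LinearIndependent K A := by
    refine Fintype.linearIndependent_iff.mpr fun t ht β => ?_
    simpa [ht] using (trace_sum_smul_mul_of_orthonormal hA t β).symm
  have hspan : Submodule.span K (Set.range A) = ⊤ :=
    hli.span_eq_top_of_card_eq_finrank' (by simp [Module.finrank_matrix, hcard, sq])
  obtain ⟨t, rfl⟩ :=
    (Submodule.mem_span_range_iff_exists_fun K).mp (hspan ▸ Submodule.mem_top : B ∈ _)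
  simp only [trace_sum_smul_mul_of_orthonormal hA]

lemma trace_mul_self_eq_sum_sq_of_orthonormal
    (hA : ∀ α β, trace (A α * A β) = if α = β then 1 else 0)
    (hcard : Fintype.card ι = Fintype.card d ^ 2) (B : Matrix d d K) :
    trace (B * B) = ∑ α, trace (B * A α) ^ 2 := by
  nth_rewrite 2 [eq_sum_trace_mul_smul_of_orthonormal hA hcard B]
  simp only [Finset.mul_sum, Matrix.mul_smul, trace_sum, trace_smul, smul_eq_mul, sq]

end Orthonormal

section Commutator

variable {d : Type*} [Fintype d]

lemma mComm_sub_smul_one [DecidableEq d] (ρ V : Matrix d d ℂ) (a : ℂ) :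
    mComm ρ (V - a • 1) = mComm ρ V := by
  simp only [mComm, Matrix.mul_sub, Matrix.sub_mul, Matrix.mul_smul, Matrix.smul_mul,
    Matrix.mul_one, Matrix.one_mul]
  abel

lemma mComm_sum_smul {ι : Type*} [Fintype ι] (M : ι → Matrix d d ℂ) (c : ι → ℂ)
    (s : Matrix d d ℂ) : mComm (∑ μ, c μ • M μ) s = ∑ μ, c μ • mComm (M μ) s := by
  simp only [mComm, Finset.sum_mul, Finset.mul_sum, Matrix.smul_mul, Matrix.mul_smul,
    ← Finset.sum_sub_distrib, smul_sub]

lemma Matrix.IsHermitian.conjTranspose_mComm {A B : Matrix d d ℂ} (hA : A.IsHermitian)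
    (hB : B.IsHermitian) : (mComm A B)ᴴ = -mComm A B := by
  simp only [mComm, conjTranspose_sub, conjTranspose_mul, hA.eq, hB.eq, neg_sub]

lemma trace_mul_mComm_mul_self (H s W : Matrix d d ℂ) :
    trace (H * mComm (s * s) W) = trace (mComm H s * (s * W + W * s)) := by
  have h₁ : trace (s * H * s * W) = trace (H * s * W * s) := by
    rw [Matrix.mul_assoc, Matrix.mul_assoc, trace_mul_comm]; simp only [Matrix.mul_assoc]
  have h₂ : trace (s * H * W * s) = trace (H * W * s * s) := by
    rw [Matrix.mul_assoc, Matrix.mul_assoc, trace_mul_comm]; simp only [Matrix.mul_assoc]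
  simp only [mComm, Matrix.mul_add, Matrix.sub_mul, Matrix.mul_sub, trace_add, trace_sub,
    ← Matrix.mul_assoc, h₁, h₂]
  ring

lemma re_trace_I_smul_mul_mComm_le {H s : Matrix d d ℂ} (hH : H.IsHermitian)
    (hs : s.IsHermitian) (W : Matrix d d ℂ) :
    (trace (Complex.I • (H * mComm (s * s) W))).re ≤
      √(trace ((mComm H s)ᴴ * mComm H s)).re *
        √(trace ((s * W + W * s)ᴴ * (s * W + W * s))).re := by
  set t := trace ((mComm H s)ᴴ * (s * W + W * s))
  have ht : trace (H * mComm (s * s) W) = -t := by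
    rw [trace_mul_mComm_mul_self, ← neg_neg (mComm H s), ← hH.conjTranspose_mComm hs,
      Matrix.neg_mul, trace_neg]
  calc (trace (Complex.I • (H * mComm (s * s) W))).re = t.im := by
        simp [trace_smul, ht]
    _ ≤ ‖t‖ := (le_abs_self _).trans (Complex.abs_im_le_norm t)
    _ ≤ _ := norm_trace_conjTranspose_mul_le _ _

end Commutator

section GammaC

variable {d ι : Type*} [Fintype d]

lemma gammaC_isHermitian (s : Matrix d d ℂ) (M : ι → Matrix d d ℂ) :
    (gammaC s M).IsHermitian := by
  ext μ ν
  simp only [conjTranspose_apply, star_trivial, gammaC, trace_mul_comm (mComm (M ν) s)]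

lemma dotProduct_gammaC_mulVec [Fintype ι] (s : Matrix d d ℂ) (M : ι → Matrix d d ℂ)
    (c : ι → ℝ) :
    c ⬝ᵥ gammaC s M *ᵥ c =
      (-trace (mComm (∑ μ, (c μ : ℂ) • M μ) s * mComm (∑ μ, (c μ : ℂ) • M μ) s)).re := by
  rw [mComm_sum_smul, Finset.sum_mul_sum]
  simp only [Matrix.smul_mul, Matrix.mul_smul, smul_smul, trace_sum, trace_smul, smul_eq_mul,
    ← Finset.sum_neg_distrib, Complex.re_sum, dotProduct, mulVec, Finset.mul_sum, gammaC]
  refine Finset.sum_congr rfl fun μ _ => Finset.sum_congr rfl fun ν _ => ?_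
  rw [← mul_neg, ← Complex.ofReal_mul, Complex.re_ofReal_mul]
  ring

end GammaC

section MaxEig

variable {ι : Type*} [Fintype ι]

lemma setOf_hasEigenvector_eq_spectrum [DecidableEq ι] (G : Matrix ι ι ℝ) :
    {c : ℝ | ∃ v : ι → ℝ, v ≠ 0 ∧ G *ᵥ v = c • v} = spectrum ℝ G := by
  ext c
  rw [Set.mem_ofPred_eq, ← spectrum_toLin', ← Module.End.hasEigenvalue_iff_mem_spectrum]
  constructor
  · rintro ⟨v, hv, hGv⟩
    exact Module.End.hasEigenvalue_of_hasEigenvector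
      ⟨Module.End.mem_eigenspace_iff.mpr (by simpa using hGv), hv⟩
  · intro h
    obtain ⟨v, hv⟩ := h.exists_hasEigenvector
    exact ⟨v, hv.2, by simpa using Module.End.mem_eigenspace_iff.mp hv.1⟩

lemma dotProduct_mulVec_le_maxEig_mul {G : Matrix ι ι ℝ} (hG : G.IsHermitian) (v : ι → ℝ) :
    v ⬝ᵥ G *ᵥ v ≤ maxEig G * (v ⬝ᵥ v) := by
  classical
  open scoped MatrixOrder in
  have hle : G ≤ algebraMap ℝ (Matrix ι ι ℝ) (maxEig G) := by
    refine le_algebraMap_of_spectrum_le (fun x hx => ?_) hG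
    rw [maxEig, setOf_hasEigenvector_eq_spectrum]
    exact le_csSup G.finite_real_spectrum.bddAbove hx
  have := ((Matrix.nonneg_iff_posSemidef).mp (sub_nonneg.mpr hle)).dotProduct_mulVec_nonneg v
  rwa [star_trivial, sub_mulVec, dotProduct_sub, sub_nonneg, Algebra.algebraMap_eq_smul_one,
    smul_mulVec, one_mulVec, dotProduct_smul, smul_eq_mul] at this

end MaxEig

section Variance

variable {d : Type*} [Fintype d]

lemma re_trace_mul_sub_smul_one_sq [DecidableEq d] {ρ V : Matrix d d ℂ} (hρ : ρ.IsHermitian)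
    (hV : V.IsHermitian) (hτ : trace ρ = 1) :
    (trace (ρ * (V - trace (ρ * V) • 1) * (V - trace (ρ * V) • 1))).re = varMat ρ V := by
  obtain ⟨r, hr⟩ : ∃ r : ℝ, trace (ρ * V) = r := ⟨_, hρ.trace_mul_eq_ofReal_re hV⟩
  have h : trace (ρ * (V - (r : ℂ) • 1) * (V - (r : ℂ) • 1)) =
      trace (ρ * V * V) - (r ^ 2 : ℝ) := by
    simp only [Matrix.mul_sub, Matrix.sub_mul, Matrix.mul_smul, Matrix.smul_mul, Matrix.mul_one,
      trace_sub, trace_smul, hτ, hr, smul_eq_mul]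
    push_cast
    ring
  rw [varMat, hr, h, Complex.sub_re, Complex.ofReal_re, Complex.ofReal_re]

lemma isHermitian_sub_trace_mul_smul_one [DecidableEq d] {ρ V : Matrix d d ℂ}
    (hρ : ρ.IsHermitian) (hV : V.IsHermitian) : (V - trace (ρ * V) • 1).IsHermitian :=
  hV.sub <| by
    rw [IsHermitian, conjTranspose_smul, conjTranspose_one, hρ.trace_mul_eq_ofReal_re hV,
      Complex.star_def, Complex.conj_ofReal]

lemma trace_mul_sub_trace_mul_smul_one [DecidableEq d] {ρ : Matrix d d ℂ} (hτ : trace ρ = 1)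
    (V : Matrix d d ℂ) : trace (ρ * (V - trace (ρ * V) • 1)) = 0 := by
  rw [Matrix.mul_sub, Matrix.mul_smul, Matrix.mul_one, trace_sub, trace_smul, hτ, smul_eq_mul,
    mul_one, sub_self]

variable {s W : Matrix d d ℂ}

lemma re_trace_mul_self_mul_mul_self_nonneg (hs : s.IsHermitian) (hW : W.IsHermitian) :
    0 ≤ (trace (s * s * W * W)).re := by
  have h : trace ((s * W)ᴴ * (s * W)) = trace (s * s * W * W) := by
    rw [conjTranspose_mul, hs.eq, hW.eq, show W * s * (s * W) = W * (s * s * W) by noncomm_ring,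
      trace_mul_comm]
  exact h ▸ re_trace_conjTranspose_mul_self_nonneg _

lemma re_trace_conjTranspose_mul_add_smul (hs : s.IsHermitian) (hW : W.IsHermitian) (c : ℝ) :
    (trace ((s * W + (c : ℂ) • (W * s))ᴴ * (s * W + (c : ℂ) • (W * s)))).re =
      (1 + c ^ 2) * (trace (s * s * W * W)).re + 2 * c * (trace (s * W * s * W)).re := by
  have h₁ : trace (W * s * (s * W)) = trace (s * s * W * W) := by
    rw [show W * s * (s * W) = W * (s * s * W) by noncomm_ring, trace_mul_comm]
  have h₂ : trace (W * s * (W * s)) = trace (s * W * s * W) := by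
    rw [show W * s * (W * s) = W * (s * W * s) by noncomm_ring, trace_mul_comm]
  have h₃ : trace (s * W * (W * s)) = trace (s * s * W * W) := by
    rw [show s * W * (W * s) = s * W * W * s by noncomm_ring, trace_mul_comm]
    simp only [Matrix.mul_assoc]
  have h₄ : trace (s * W * (s * W)) = trace (s * W * s * W) := by
    simp only [Matrix.mul_assoc]
  have h : trace ((s * W + (c : ℂ) • (W * s))ᴴ * (s * W + (c : ℂ) • (W * s))) =
      ((1 + c ^ 2 : ℝ) : ℂ) * trace (s * s * W * W) +
        ((2 * c : ℝ) : ℂ) * trace (s * W * s * W) := by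
    rw [conjTranspose_add, conjTranspose_smul, conjTranspose_mul, conjTranspose_mul, hs.eq, hW.eq,
      Complex.star_def, Complex.conj_ofReal]
    simp only [Matrix.add_mul, Matrix.mul_add, Matrix.smul_mul, Matrix.mul_smul, trace_add,
      trace_smul, smul_eq_mul, h₁, h₂, h₃, h₄]
    push_cast
    ring
  rw [h, Complex.add_re, Complex.re_ofReal_mul, Complex.re_ofReal_mul]

/-- The parallelogram law `‖sW + Ws‖² + ‖sW - Ws‖² = 2‖sW‖² + 2‖Ws‖²` for the Frobenius norm. -/
lemma re_trace_conjTranspose_mul_anticomm_le (hs : s.IsHermitian) (hW : W.IsHermitian) :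
    (trace ((s * W + W * s)ᴴ * (s * W + W * s))).re ≤ 4 * (trace (s * s * W * W)).re := by
  have hY := re_trace_conjTranspose_mul_add_smul hs hW 1
  have hZ := re_trace_conjTranspose_mul_add_smul hs hW (-1)
  have hZ₀ := re_trace_conjTranspose_mul_self_nonneg (s * W + ((-1 : ℝ) : ℂ) • (W * s))
  rw [Complex.ofReal_one, one_smul] at hY
  linarith

lemma re_trace_conjTranspose_mul_anticomm_of_pure [DecidableEq d] {ρ : Matrix d d ℂ}
    {ψ : d → ℂ} (hψ : star ψ ⬝ᵥ ψ = 1) (hρψ : ρ = vecMulVec ψ (star ψ)) (hs : s.PosSemidef)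
    (hss : s * s = ρ) (hW : W.IsHermitian) (hρW : trace (ρ * W) = 0) :
    (trace ((s * W + W * s)ᴴ * (s * W + W * s))).re = 2 * (trace (ρ * W * W)).re := by
  have hsρ : s = ρ := by
    refine hs.eq_of_mul_self_eq_of_idempotent (hρψ ▸ posSemidef_vecMulVec_self_star ψ) hss ?_
    rw [hρψ, vecMulVec_mul_vecMulVec, hψ, one_smul]
  have hρWρW : trace (ρ * W * ρ * W) = 0 := by
    rw [hρψ, trace_vecMulVec_mul_mul_vecMulVec_mul, ← hρψ, hρW, zero_pow two_ne_zero]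
  have h := re_trace_conjTranspose_mul_add_smul hs.1 hW 1
  rw [Complex.ofReal_one, one_smul] at h
  rw [h, ← hss, hsρ, hρWρW]
  norm_num

end Variance

section LocalOp

variable {N : ℕ} {n : Fin N → ℕ}

lemma localOp_smul (i : Fin N) (z : ℂ) (B : Matrix (Fin (n i)) (Fin (n i)) ℂ) :
    localOp n i (z • B) = z • localOp n i B := by
  ext x y
  simp [localOp, mul_assoc]

lemma localOp_sum (i : Fin N) {κ : Type*} (t : Finset κ)
    (B : κ → Matrix (Fin (n i)) (Fin (n i)) ℂ) :
    localOp n i (∑ α ∈ t, B α) = ∑ α ∈ t, localOp n i (B α) := by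
  ext x y
  simp [localOp, Matrix.sum_apply, Finset.sum_mul]

lemma localOp_isHermitian {i : Fin N} {B : Matrix (Fin (n i)) (Fin (n i)) ℂ}
    (hB : B.IsHermitian) : (localOp n i B).IsHermitian := by
  ext x y
  simp [localOp, ← hB.apply (x i) (y i), star_prod, eq_comm]

variable {A : ∀ i : Fin N, Fin (n i ^ 2) → Matrix (Fin (n i)) (Fin (n i)) ℂ}

lemma sum_localOp_eq_sum_smul_obsFamily
    (hAo : ∀ i α β, trace (A i α * A i β) = if α = β then 1 else 0)
    (H : ∀ i : Fin N, Matrix (Fin (n i)) (Fin (n i)) ℂ) :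
    ∑ i, localOp n i (H i) = ∑ μ, trace (H μ.1 * A μ.1 μ.2) • obsFamily n A μ := by
  rw [← Finset.univ_sigma_univ, Finset.sum_sigma]
  refine Finset.sum_congr rfl fun i _ => ?_
  rw [eq_sum_trace_mul_smul_of_orthonormal (hAo i) (by simp) (H i), localOp_sum]
  exact Finset.sum_congr rfl fun α _ => localOp_smul i _ _

lemma re_trace_I_smul_sum_localOp_mul_mComm_le
    {s : Matrix ((j : Fin N) → Fin (n j)) ((j : Fin N) → Fin (n j)) ℂ} (hs : s.IsHermitian)
    (hAh : ∀ i α, (A i α).IsHermitian)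
    (hAo : ∀ i α β, trace (A i α * A i β) = if α = β then 1 else 0)
    {Hloc : ∀ i : Fin N, Matrix (Fin (n i)) (Fin (n i)) ℂ} (hHloc : ∀ i, (Hloc i).IsHermitian)
    (W : Matrix ((j : Fin N) → Fin (n j)) ((j : Fin N) → Fin (n j)) ℂ) :
    (trace (Complex.I • ((∑ i, localOp n i (Hloc i)) * mComm (s * s) W))).re ≤
      √(maxEig (gammaC s (obsFamily n A)) * ∑ i, (trace (Hloc i * Hloc i)).re) *
        √(trace ((s * W + W * s)ᴴ * (s * W + W * s))).re := by
  set H := ∑ i, localOp n i (Hloc i)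
  have hH : H.IsHermitian := (conjTranspose_sum _ _).trans <|
    Finset.sum_congr rfl fun i _ => (localOp_isHermitian (hHloc i)).eq
  set c : ((i : Fin N) × Fin (n i ^ 2)) → ℝ := fun μ => (trace (Hloc μ.1 * A μ.1 μ.2)).re
  have hc (μ : (i : Fin N) × Fin (n i ^ 2)) : (c μ : ℂ) = trace (Hloc μ.1 * A μ.1 μ.2) :=
    ((hHloc μ.1).trace_mul_eq_ofReal_re (hAh μ.1 μ.2)).symm
  have hHc : H = ∑ μ, (c μ : ℂ) • obsFamily n A μ := by
    simp only [hc]; exact sum_localOp_eq_sum_smul_obsFamily hAo Hloc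
  have hX : (trace ((mComm H s)ᴴ * mComm H s)).re = c ⬝ᵥ gammaC s (obsFamily n A) *ᵥ c := by
    rw [hH.conjTranspose_mComm hs, Matrix.neg_mul, trace_neg, dotProduct_gammaC_mulVec, hHc]
  have hcc : c ⬝ᵥ c = ∑ i, (trace (Hloc i * Hloc i)).re := by
    rw [dotProduct, ← Finset.univ_sigma_univ, Finset.sum_sigma]
    refine Finset.sum_congr rfl fun i _ => ?_
    have hci (α : Fin (n i ^ 2)) : trace (Hloc i * A i α) = (c ⟨i, α⟩ : ℂ) := (hc ⟨i, α⟩).symm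
    simp only [trace_mul_self_eq_sum_sq_of_orthonormal (hAo i) (by simp), hci, Complex.re_sum,
      ← Complex.ofReal_mul, Complex.ofReal_re, sq]
  refine (re_trace_I_smul_mul_mComm_le hH hs W).trans ?_
  rw [hX, ← hcc]
  gcongr
  exact dotProduct_mulVec_le_maxEig_mul (gammaC_isHermitian _ _) c

end LocalOp

theorem power_bound_with_quantum_state_advantage_general
    {N : ℕ} {n : Fin N → ℕ}
    (ρ : Matrix ((j : Fin N) → Fin (n j)) ((j : Fin N) → Fin (n j)) ℂ)
    (hτ : ρ.trace = 1)
    (s : Matrix ((j : Fin N) → Fin (n j)) ((j : Fin N) → Fin (n j)) ℂ)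
    (hs : s.PosSemidef) (hss : s * s = ρ)
    (A : ∀ i : Fin N, Fin (n i ^ 2) → Matrix (Fin (n i)) (Fin (n i)) ℂ)
    (hAh : ∀ i α, (A i α).IsHermitian)
    (hAo : ∀ i α β, Matrix.trace (A i α * A i β) = if α = β then 1 else 0)
    (Hloc : ∀ i : Fin N, Matrix (Fin (n i)) (Fin (n i)) ℂ)
    (hHloc : ∀ i, (Hloc i).IsHermitian)
    (V : Matrix ((j : Fin N) → Fin (n j)) ((j : Fin N) → Fin (n j)) ℂ)
    (hV : V.IsHermitian) :
    (Matrix.trace (Complex.I • ((∑ i, localOp n i (Hloc i)) * mComm ρ V))).re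
      ≤ 2 * Real.sqrt (maxEig (gammaC s (obsFamily n A))
          * (∑ i, (Matrix.trace (Hloc i * Hloc i)).re) * varMat ρ V) ∧
    (∀ ψ : ((j : Fin N) → Fin (n j)) → ℂ, star ψ ⬝ᵥ ψ = 1 →
      ρ = vecMulVec ψ (star ψ) →
      (Matrix.trace (Complex.I • ((∑ i, localOp n i (Hloc i)) * mComm ρ V))).re
        ≤ Real.sqrt (2 * maxEig (gammaC s (obsFamily n A))
            * (∑ i, (Matrix.trace (Hloc i * Hloc i)).re) * varMat ρ V)) := by
  set ΓK := maxEig (gammaC s (obsFamily n A)) * ∑ i, (trace (Hloc i * Hloc i)).re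
  have hρ : ρ.IsHermitian := by rw [← hss, IsHermitian, conjTranspose_mul, hs.1.eq]
  set W := V - trace (ρ * V) • 1
  have hW : W.IsHermitian := isHermitian_sub_trace_mul_smul_one hρ hV
  have hP := re_trace_I_smul_sum_localOp_mul_mComm_le hs.1 hAh hAo hHloc W
  rw [hss, mComm_sub_smul_one] at hP
  have hvar : (trace (ρ * W * W)).re = varMat ρ V := re_trace_mul_sub_smul_one_sq hρ hV hτ
  have hvar₀ : 0 ≤ varMat ρ V := by
    rw [← hvar, ← hss]; exact re_trace_mul_self_mul_mul_self_nonneg hs.1 hW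
  refine ⟨?_, fun ψ hψ hρψ => ?_⟩
  · have h4 : √(4 : ℝ) = 2 := by
      rw [show (4 : ℝ) = 2 ^ 2 by norm_num, Real.sqrt_sq zero_le_two]
    calc _ ≤ _ := hP
      _ ≤ √ΓK * √(4 * varMat ρ V) := by
        gcongr
        rw [← hvar, ← hss]; exact re_trace_conjTranspose_mul_anticomm_le hs.1 hW
      _ = 2 * √(ΓK * varMat ρ V) := by
        rw [Real.sqrt_mul' _ hvar₀, Real.sqrt_mul' _ hvar₀, h4]; ring
  · have hY := re_trace_conjTranspose_mul_anticomm_of_pure hψ hρψ hs hss hW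
      (trace_mul_sub_trace_mul_smul_one hτ V)
    calc _ ≤ _ := hP
      _ = _ := by rw [hY, hvar, ← Real.sqrt_mul' _ (by positivity)]; ring_nf

/-- **Theorem 1, with `κ` replaced by its proven bounds.**
For a density matrix `ρ` on the `N`-cell space (square root `s = √ρ`), battery
Hamiltonian `H = Σ_i H_i` (each `H_i` Hermitian on cell `i`, identity elsewhere)
and any Hermitian driving operator `V`, the instantaneous charging power
`P = tr(iH[ρ,V])` satisfies `P ≤ 2 √(Γ_C(ρ) · (Σ_i tr(H_i²)) · Var_ρ(V))`;
and if `ρ` is pure, the sharper bound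
`P ≤ √(2 Γ_C(ρ) · (Σ_i tr(H_i²)) · Var_ρ(V))` holds. -/
theorem power_bound_with_quantum_state_advantage
    {N : ℕ} {n : Fin N → ℕ}
    (ρ : Matrix ((j : Fin N) → Fin (n j)) ((j : Fin N) → Fin (n j)) ℂ)
    (hρ : ρ.PosSemidef) (hτ : ρ.trace = 1)
    (s : Matrix ((j : Fin N) → Fin (n j)) ((j : Fin N) → Fin (n j)) ℂ)
    (hs : s.PosSemidef) (hss : s * s = ρ)
    (A : ∀ i : Fin N, Fin (n i ^ 2) → Matrix (Fin (n i)) (Fin (n i)) ℂ)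
    (hAh : ∀ i α, (A i α).IsHermitian)
    (hAo : ∀ i α β, Matrix.trace (A i α * A i β) = if α = β then 1 else 0)
    (Hloc : ∀ i : Fin N, Matrix (Fin (n i)) (Fin (n i)) ℂ)
    (hHloc : ∀ i, (Hloc i).IsHermitian)
    (V : Matrix ((j : Fin N) → Fin (n j)) ((j : Fin N) → Fin (n j)) ℂ)
    (hV : V.IsHermitian) :
    (Matrix.trace (Complex.I • ((∑ i, localOp n i (Hloc i)) * mComm ρ V))).re
      ≤ 2 * Real.sqrt (maxEig (gammaC s (obsFamily n A))
          * (∑ i, (Matrix.trace (Hloc i * Hloc i)).re) * varMat ρ V) ∧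
    (∀ ψ : ((j : Fin N) → Fin (n j)) → ℂ, star ψ ⬝ᵥ ψ = 1 →
      ρ = vecMulVec ψ (star ψ) →
      (Matrix.trace (Complex.I • ((∑ i, localOp n i (Hloc i)) * mComm ρ V))).re
        ≤ Real.sqrt (2 * maxEig (gammaC s (obsFamily n A))
            * (∑ i, (Matrix.trace (Hloc i * Hloc i)).re) * varMat ρ V)) :=
  power_bound_with_quantum_state_advantage_general ρ hτ s hs hss A hAh hAo Hloc hHloc V hV
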